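/- Under the hypotheses of the exact variance formula for θ̂^{L2} (independent word counts x_1, …, x_n with fixed labels; Var(x_d) = m·θ_{l j}(1 − θ_{l j}) if d is positively labelled into class l and Var(x_d) = m·(Σ_{b ≠ l} θ_{b j}(1 − θ_{b j}))/(k − 1)² if d is negatively labelled as not in class l; θ̂^{L2} := Σ_d (y_i(d) + t − z_i(d))·x_d / (m·n·(p_i − q_i + t)); k ≥ 2; each θ_l in the probability simplex; t > 1), one has Var(θ̂^{L2}) ≤ ((1 + t)² + t²/(k − 1)) / (4·(t − 1)²·m·n). -/

import Mathlib

open MeasureTheory ProbabilityTheory Finset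

/-- Number of documents positively labelled into class `l`. -/
def posCount {n k : ℕ} (pos : Fin n → Bool) (lab : Fin n → Fin k) (l : Fin k) : ℕ :=
  (Finset.univ.filter fun d => pos d = true ∧ lab d = l).card

/-- Number of documents negatively labelled as not in class `l`. -/
def negCount {n k : ℕ} (pos : Fin n → Bool) (lab : Fin n → Fin k) (l : Fin k) : ℕ :=
  (Finset.univ.filter fun d => pos d = false ∧ lab d = l).card

/-!
The estimator is `(∑ d, c_d x_d) / D` with weights `c_d = y_i(d) + t - z_i(d)` and
`D = m n (p_i - q_i + t)`. By independence its variance is `(∑ d, c_d² Var x_d) / D²`.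
Since `θ (1 - θ) ≤ 1/4`, a positively labelled document contributes at most
`(1 + t)² m / 4` and a negatively labelled one at most `t² m / (4 (k - 1))`, so the numerator
is at most `n m ((1 + t)² + t² / (k - 1)) / 4`, while `p_i ≥ 0` and `q_i ≤ 1` give
`D ≥ m n (t - 1) > 0`.
-/

lemma mul_one_sub_le_one_div_four (a : ℝ) : a * (1 - a) ≤ 1 / 4 := by
  nlinarith [sq_nonneg (1 - 2 * a)]

lemma mul_mul_one_sub_le_div_four {m : ℝ} (hm : 0 ≤ m) (a : ℝ) : m * a * (1 - a) ≤ m / 4 := by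
  rw [mul_assoc]
  nlinarith [mul_one_sub_le_one_div_four a]

lemma sum_mul_one_sub_le_card_div_four {ι : Type*} (s : Finset ι) (a : ι → ℝ) :
    ∑ b ∈ s, a b * (1 - a b) ≤ s.card / 4 := by
  calc ∑ b ∈ s, a b * (1 - a b) ≤ ∑ _b ∈ s, (1 : ℝ) / 4 :=
        sum_le_sum fun b _ => mul_one_sub_le_one_div_four (a b)
    _ = s.card / 4 := by rw [sum_const, nsmul_eq_mul]; ring

lemma mul_sum_erase_mul_one_sub_div_le {k : ℕ} (hk : 2 ≤ k) {m : ℝ} (hm : 0 ≤ m)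
    (a : Fin k → ℝ) (l : Fin k) :
    m * (∑ b ∈ univ.erase l, a b * (1 - a b)) / ((k : ℝ) - 1) ^ 2 ≤ m / (4 * ((k : ℝ) - 1)) := by
  have hk1 : (0 : ℝ) < (k : ℝ) - 1 := by
    have : (2 : ℝ) ≤ k := by exact_mod_cast hk
    linarith
  have hsum : ∑ b ∈ univ.erase l, a b * (1 - a b) ≤ ((k : ℝ) - 1) / 4 := by
    have := sum_mul_one_sub_le_card_div_four (univ.erase l) a
    rwa [card_erase_of_mem (mem_univ l), card_fin, Nat.cast_sub (by omega), Nat.cast_one] at this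
  calc m * (∑ b ∈ univ.erase l, a b * (1 - a b)) / ((k : ℝ) - 1) ^ 2
      ≤ m * (((k : ℝ) - 1) / 4) / ((k : ℝ) - 1) ^ 2 := by gcongr
    _ = m / (4 * ((k : ℝ) - 1)) := by field_simp

namespace ProbabilityTheory

variable {Ω : Type*} [MeasurableSpace Ω] {μ : Measure Ω}

lemma variance_div_const (X : Ω → ℝ) (D : ℝ) :
    variance (fun ω => X ω / D) μ = variance X μ / D ^ 2 := by
  simp only [div_eq_mul_inv, variance_mul_const, inv_pow]

lemma iIndepFun.variance_fun_sum_const_mul {ι : Type*} [Fintype ι] {X : ι → Ω → ℝ}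
    (hX : iIndepFun X μ) (hmem : ∀ i, MemLp (X i) 2 μ) (c : ι → ℝ) :
    variance (fun ω => ∑ i, c i * X i ω) μ = ∑ i, c i ^ 2 * variance (X i) μ := by
  have hsum := IndepFun.variance_sum (μ := μ) (X := fun i ω => c i * X i ω) (s := univ)
    (fun i _ => (hmem i).const_mul (c i))
    (fun a _ b _ hab => (hX.indepFun hab).comp (measurable_const_mul _) (measurable_const_mul _))
  simp only [variance_const_mul] at hsum
  rw [← hsum]
  congr 1
  ext ω
  simp only [Finset.sum_apply]

end ProbabilityTheory

section Estimator

variable {n k : ℕ} (pos : Fin n → Bool) (lab : Fin n → Fin k) (i : Fin k) (t : ℝ)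

/-- The weight `y_i(d) + t - z_i(d)` of document `d` in the L2 estimator. -/
def l2Weight (d : Fin n) : ℝ :=
  (if pos d = true ∧ lab d = i then (1 : ℝ) else 0) + t
    - (if pos d = false ∧ lab d = i then (1 : ℝ) else 0)

variable {pos lab i t}

lemma l2Weight_sq_le_of_pos (ht : 0 ≤ t) {d : Fin n} (hd : pos d = true) :
    l2Weight pos lab i t d ^ 2 ≤ (1 + t) ^ 2 := by
  simp only [l2Weight, hd, Bool.true_eq_false, true_and, false_and, if_false]
  split_ifs <;> nlinarith

lemma l2Weight_sq_le_of_neg (ht : 1 ≤ t) {d : Fin n} (hd : pos d = false) :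
    l2Weight pos lab i t d ^ 2 ≤ t ^ 2 := by
  simp only [l2Weight, hd, Bool.false_eq_true, true_and, false_and, if_false]
  split_ifs <;> nlinarith

lemma l2Weight_sq_mul_le (hk : 2 ≤ k) (ht : 1 < t) {m v : ℝ} (hm : 0 ≤ m) (hv : 0 ≤ v)
    {d : Fin n} (hv_pos : pos d = true → v ≤ m / 4)
    (hv_neg : pos d = false → v ≤ m / (4 * ((k : ℝ) - 1))) :
    l2Weight pos lab i t d ^ 2 * v ≤ m * ((1 + t) ^ 2 + t ^ 2 / ((k : ℝ) - 1)) / 4 := by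
  have hk1 : (0 : ℝ) < (k : ℝ) - 1 := by
    have : (2 : ℝ) ≤ k := by exact_mod_cast hk
    linarith
  cases hd : pos d
  case true =>
    calc l2Weight pos lab i t d ^ 2 * v ≤ (1 + t) ^ 2 * (m / 4) :=
          mul_le_mul (l2Weight_sq_le_of_pos (by linarith) hd) (hv_pos hd) hv (by positivity)
      _ ≤ m * ((1 + t) ^ 2 + t ^ 2 / ((k : ℝ) - 1)) / 4 := by
          have : 0 ≤ m * (t ^ 2 / ((k : ℝ) - 1)) := by positivity
          linarith
  case false =>
    calc l2Weight pos lab i t d ^ 2 * v ≤ t ^ 2 * (m / (4 * ((k : ℝ) - 1))) :=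
          mul_le_mul (l2Weight_sq_le_of_neg ht.le hd) (hv_neg hd) hv (by positivity)
      _ = m * (t ^ 2 / ((k : ℝ) - 1)) / 4 := by field_simp
      _ ≤ m * ((1 + t) ^ 2 + t ^ 2 / ((k : ℝ) - 1)) / 4 := by
          have : 0 ≤ m * (1 + t) ^ 2 := by positivity
          linarith

variable (pos lab i)

lemma negCount_le : negCount pos lab i ≤ n :=
  (card_filter_le _ _).trans_eq (card_fin n)

lemma sub_one_le_posCount_div_sub_negCount_div_add (hn : 1 ≤ n) :
    t - 1 ≤ (posCount pos lab i : ℝ) / n - (negCount pos lab i : ℝ) / n + t := by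
  have hn0 : (0 : ℝ) < n := by exact_mod_cast hn
  have hq : (negCount pos lab i : ℝ) / n ≤ 1 :=
    (div_le_one hn0).2 (by exact_mod_cast negCount_le pos lab i)
  have hp : 0 ≤ (posCount pos lab i : ℝ) / n := by positivity
  linarith

end Estimator

theorem L2_estimator_variance_order_general {Ω : Type*} [MeasurableSpace Ω]
    (μ : Measure Ω) [IsProbabilityMeasure μ]
    {k v : ℕ} (hk : 2 ≤ k)
    (θ : Fin k → Fin v → ℝ)
    (m : ℕ) (hm : 1 ≤ m) (t : ℝ) (ht : 1 < t) (j : Fin v) (i : Fin k)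
    (n : ℕ) (hn : 1 ≤ n) (x : Fin n → Ω → ℝ)
    (pos : Fin n → Bool) (lab : Fin n → Fin k)
    (hindep : iIndepFun x μ)
    (hmem : ∀ d, MemLp (x d) 2 μ)
    (hvar_pos : ∀ d, pos d = true →
      variance (x d) μ = (m : ℝ) * θ (lab d) j * (1 - θ (lab d) j))
    (hvar_neg : ∀ d, pos d = false →
      variance (x d) μ
        = (m : ℝ) * (∑ b ∈ Finset.univ.erase (lab d), θ b j * (1 - θ b j))
            / ((k : ℝ) - 1) ^ 2) :
    variance (fun ω =>
        (∑ d, ((if pos d = true ∧ lab d = i then (1 : ℝ) else 0) + t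
            - (if pos d = false ∧ lab d = i then (1 : ℝ) else 0)) * x d ω)
          / ((m : ℝ) * n * ((posCount pos lab i : ℝ) / n
              - (negCount pos lab i : ℝ) / n + t))) μ
      ≤ ((1 + t) ^ 2 + t ^ 2 / ((k : ℝ) - 1))
          / (4 * (t - 1) ^ 2 * (m : ℝ) * n) := by
  have hn0 : (0 : ℝ) < n := by exact_mod_cast hn
  have hm0 : (0 : ℝ) < m := by exact_mod_cast hm
  set M := (1 + t) ^ 2 + t ^ 2 / ((k : ℝ) - 1)
  set D := (m : ℝ) * n * ((posCount pos lab i : ℝ) / n - (negCount pos lab i : ℝ) / n + t)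
  have hD : (m : ℝ) * n * (t - 1) ≤ D :=
    mul_le_mul_of_nonneg_left (sub_one_le_posCount_div_sub_negCount_div_add pos lab i hn)
      (by positivity)
  have hnum : ∑ d, l2Weight pos lab i t d ^ 2 * variance (x d) μ ≤ n * (m * M / 4) := by
    refine (sum_le_sum fun d _ => l2Weight_sq_mul_le hk ht hm0.le (variance_nonneg _ _)
      (fun hd => (hvar_pos d hd).trans_le (mul_mul_one_sub_le_div_four hm0.le _))
      (fun hd => (hvar_neg d hd).trans_le
        (mul_sum_erase_mul_one_sub_div_le hk hm0.le (fun b => θ b j) _))).trans_eq ?_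
    rw [sum_const, card_univ, Fintype.card_fin, nsmul_eq_mul]
  change variance (fun ω => (∑ d, l2Weight pos lab i t d * x d ω) / D) μ ≤ _
  rw [variance_div_const, hindep.variance_fun_sum_const_mul hmem]
  have hmnt : 0 < (m : ℝ) * n * (t - 1) := by have := sub_pos.2 ht; positivity
  calc (∑ d, l2Weight pos lab i t d ^ 2 * variance (x d) μ) / D ^ 2
      ≤ n * (m * M / 4) / ((m : ℝ) * n * (t - 1)) ^ 2 := by
        gcongr
        exact (sum_nonneg fun d _ => mul_nonneg (sq_nonneg _) (variance_nonneg _ _)).trans hnum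
    _ = M / (4 * (t - 1) ^ 2 * (m : ℝ) * n) := by
        have : t - 1 ≠ 0 := (sub_pos.2 ht).ne'
        field_simp

/-- Order bound on the variance of the L2 estimator (Theorem 3, part 2): under
the hypotheses of the exact variance formula (independent word counts with the
per-document multinomial variances and fixed labels), the variance of
`θ̂ = ∑ d, (y_i(d) + t - z_i(d)) x d / (m n (p_i - q_i + t))` is at most
`((1 + t)² + t²/(k - 1)) / (4 (t - 1)² m n)`, i.e. of order
`O(1 / (m (|S₁| + |S₂|)))`. -/
theorem L2_estimator_variance_order {Ω : Type*} [MeasurableSpace Ω]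
    (μ : Measure Ω) [IsProbabilityMeasure μ]
    {k v : ℕ} (hk : 2 ≤ k)
    (θ : Fin k → Fin v → ℝ)
    (hθ0 : ∀ l j', 0 ≤ θ l j') (hθ1 : ∀ l, ∑ j', θ l j' = 1)
    (m : ℕ) (hm : 1 ≤ m) (t : ℝ) (ht : 1 < t) (j : Fin v) (i : Fin k)
    (n : ℕ) (hn : 1 ≤ n) (x : Fin n → Ω → ℝ)
    (pos : Fin n → Bool) (lab : Fin n → Fin k)
    (hindep : iIndepFun x μ)
    (hmem : ∀ d, MemLp (x d) 2 μ)
    (hvar_pos : ∀ d, pos d = true →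
      variance (x d) μ = (m : ℝ) * θ (lab d) j * (1 - θ (lab d) j))
    (hvar_neg : ∀ d, pos d = false →
      variance (x d) μ
        = (m : ℝ) * (∑ b ∈ Finset.univ.erase (lab d), θ b j * (1 - θ b j))
            / ((k : ℝ) - 1) ^ 2) :
    variance (fun ω =>
        (∑ d, ((if pos d = true ∧ lab d = i then (1 : ℝ) else 0) + t
            - (if pos d = false ∧ lab d = i then (1 : ℝ) else 0)) * x d ω)
          / ((m : ℝ) * n * ((posCount pos lab i : ℝ) / n
              - (negCount pos lab i : ℝ) / n + t))) μ
      ≤ ((1 + t) ^ 2 + t ^ 2 / ((k : ℝ) - 1))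
          / (4 * (t - 1) ^ 2 * (m : ℝ) * n) :=
  L2_estimator_variance_order_general μ hk θ m hm t ht j i n hn x pos lab hindep hmem hvar_pos
    hvar_neg
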